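/- arXiv:1310.3479 — 2 statements merged into one kernel-verified Lean document; each statement's English description precedes it below -/
import Mathlib

section
/- Let A be a k-algebra and e ∈ A an idempotent. If the right A-module A/AeA admits a projective resolution all of whose components in positive degrees (i.e., except degree 0) lie in add(eA), then Tor_i^A(A/AeA, A/AeA) = 0 for all i > 0; in particular the canonical surjection A → A/AeA is a homological ring epimorphism and AeA is a stratifying ideal. -/
open CategoryTheory MulOpposite

/-!
Write `F M = M ⧸ M·J` with `J = AeA`, so that `Tor_n^A(-, A/J)` is the `n`-th left derived functor
of `F`. Since `e ∈ J` and `e` is idempotent, every element `x = e x` of `eA` lies in `eA·J`, so `F`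
kills `eA`, hence every module in `add (eA)`. Thus `F` applied to the given resolution vanishes in
positive degrees, so `L_n F (A/J) = 0` for `n > 0`, and this can be read off any other projective
resolution.
-/

/-- For a right `A`-module `M` (i.e. a module over `Aᵐᵒᵖ`) and a (two-sided) ideal,
represented by the ideal `J` of `Aᵐᵒᵖ`, the map induced by a morphism `f : M ⟶ N`
on the quotients `M ⧸ M·J → N ⧸ N·J`; these quotients compute `M ⊗_A (A ⧸ J)`. -/
noncomputable def torQuotMap {A : Type} [Ring A] (J : Ideal Aᵐᵒᵖ)
    {M N : ModuleCat Aᵐᵒᵖ} (f : M ⟶ N) :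
    (M ⧸ (J • (⊤ : Submodule Aᵐᵒᵖ M))) →ₗ[Aᵐᵒᵖ] (N ⧸ (J • (⊤ : Submodule Aᵐᵒᵖ N))) :=
  Submodule.mapQ _ _ f.hom (Submodule.smul_le.mpr fun r hr m _ =>
    Submodule.mem_comap.mpr (by
      rw [map_smul]
      exact Submodule.smul_mem_smul hr Submodule.mem_top))

open CategoryTheory.Limits

namespace Submodule

variable {R M N : Type*} [Ring R] [AddCommGroup M] [Module R M] [AddCommGroup N] [Module R N]
  {J : Ideal R}

theorem smul_top_eq_top_of_surjective {f : M →ₗ[R] N} (hf : Function.Surjective f)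
    (h : J • (⊤ : Submodule R M) = ⊤) : J • (⊤ : Submodule R N) = ⊤ := by
  rw [← LinearMap.range_eq_top.mpr hf, LinearMap.range_eq_map, ← map_smul'', h]

theorem smul_top_pi_eq_top {ι : Type*} [Finite ι] (h : J • (⊤ : Submodule R M) = ⊤) :
    J • (⊤ : Submodule R (ι → M)) = ⊤ := by
  classical
  refine eq_top_iff.mpr ?_
  calc ⊤ = ⨆ i, map (LinearMap.single R (fun _ : ι => M) i) ⊤ := by rw [iSup_map_single, pi_top]
    _ ≤ J • ⊤ := iSup_le fun i => by
      rw [← h, map_smul'']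
      exact smul_mono_right _ le_top

end Submodule

theorem smul_top_span_idempotent_eq_top {A : Type*} [Ring A] {e : A} (he : IsIdempotentElem e)
    {J : Ideal Aᵐᵒᵖ} (heJ : op e ∈ J) :
    J • (⊤ : Submodule Aᵐᵒᵖ (Submodule.span Aᵐᵒᵖ ({e} : Set A))) = ⊤ := by
  refine eq_top_iff.mpr fun x _ => ?_
  obtain ⟨a, ha⟩ := Submodule.mem_span_singleton.mp x.2
  have hx : x = op (e * unop a) • ⟨e, Submodule.mem_span_singleton_self e⟩ := by
    apply Subtype.ext
    change (x : A) = e * (e * unop a)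
    rw [← mul_assoc, he, ← ha]
    rfl
  rw [hx]
  exact Submodule.smul_mem_smul (by simpa using J.mul_mem_left (op (unop a)) heJ)
    Submodule.mem_top

section LeftDerived

variable {C : Type*} [Category C] [Abelian C] [HasProjectiveResolutions C] {X : C}

theorem isZero_leftDerived_obj_of_isZero_map_X {D : Type*} [Category D] [Abelian D]
    (F : C ⥤ D) [F.Additive] (P : ProjectiveResolution X) (n : ℕ)
    (h : IsZero (F.obj (P.complex.X n))) : IsZero ((F.leftDerived n).obj X) := by
  refine IsZero.of_iso ((HomologicalComplex.exactAt_iff_isZero_homology _ n).mp ?_)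
    (P.isoLeftDerivedObj F n)
  rw [HomologicalComplex.exactAt_iff]
  exact ShortComplex.exact_of_isZero_X₂ _ h

theorem exact_map_d_of_isZero_leftDerived {R : Type*} [Ring R] (F : C ⥤ ModuleCat R) [F.Additive]
    (Q : ProjectiveResolution X) (i : ℕ) (h : IsZero ((F.leftDerived (i + 1)).obj X)) :
    Function.Exact (F.map (Q.complex.d (i + 2) (i + 1))).hom
      (F.map (Q.complex.d (i + 1) i)).hom := by
  have hexact : ((F.mapHomologicalComplex _).obj Q.complex).ExactAt (i + 1) :=
    (HomologicalComplex.exactAt_iff_isZero_homology _ _).mpr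
      (h.of_iso (Q.isoLeftDerivedObj F (i + 1)).symm)
  rw [HomologicalComplex.exactAt_iff' _ (i + 2) (i + 1) i (by simp [ChainComplex.prev])
    (ChainComplex.next_nat_succ i), ShortComplex.moduleCat_exact_iff_range_eq_ker] at hexact
  exact LinearMap.exact_iff.mpr hexact.symm

end LeftDerived

section TorQuot

variable {A : Type} [Ring A] (J : Ideal Aᵐᵒᵖ)

noncomputable def torQuotFunctor : ModuleCat Aᵐᵒᵖ ⥤ ModuleCat Aᵐᵒᵖ where
  obj M := ModuleCat.of _ (M ⧸ (J • (⊤ : Submodule Aᵐᵒᵖ M)))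
  map f := ModuleCat.ofHom (torQuotMap J f)
  map_id M := by
    ext
    rfl
  map_comp f g := by
    ext
    rfl

instance : (torQuotFunctor J).Additive where
  map_add := by
    intros
    ext x
    obtain ⟨x, rfl⟩ := Submodule.Quotient.mk_surjective _ x
    rfl

theorem isZero_torQuotFunctor_obj {M : ModuleCat Aᵐᵒᵖ} (h : J • (⊤ : Submodule Aᵐᵒᵖ M) = ⊤) :
    IsZero ((torQuotFunctor J).obj M) :=
  @ModuleCat.isZero_of_subsingleton _ _ _ (Submodule.Quotient.subsingleton_iff.mpr h)

end TorQuot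

theorem stmt1_general {A : Type} [Ring A]
    (e : A) (he : IsIdempotentElem e)
    (J : Ideal Aᵐᵒᵖ)
    (hJ : J = Ideal.span (Set.range fun p : A × A => op (p.1 * e * p.2)))
    (hres : ∃ P : ProjectiveResolution
        (ModuleCat.of Aᵐᵒᵖ (A ⧸ (J • (⊤ : Submodule Aᵐᵒᵖ A)))),
      ∀ n : ℕ, 0 < n →
        ∃ (m : ℕ)
          (r : P.complex.X n →ₗ[Aᵐᵒᵖ] (Fin m → (Submodule.span Aᵐᵒᵖ ({e} : Set A))))
          (s : (Fin m → (Submodule.span Aᵐᵒᵖ ({e} : Set A))) →ₗ[Aᵐᵒᵖ] P.complex.X n),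
          s.comp r = LinearMap.id) :
    ∀ (Q : ProjectiveResolution
        (ModuleCat.of Aᵐᵒᵖ (A ⧸ (J • (⊤ : Submodule Aᵐᵒᵖ A))))) (i : ℕ),
      Function.Exact (torQuotMap J (Q.complex.d (i + 2) (i + 1)))
        (torQuotMap J (Q.complex.d (i + 1) i)) := by
  obtain ⟨P, hP⟩ := hres
  have heJ : op e ∈ J := hJ ▸ Ideal.subset_span ⟨(1, 1), by simp⟩
  have hvanish (n : ℕ) (hn : 0 < n) :
      IsZero (((torQuotFunctor J).leftDerived n).obj
        (ModuleCat.of Aᵐᵒᵖ (A ⧸ (J • (⊤ : Submodule Aᵐᵒᵖ A))))) := by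
    obtain ⟨m, r, s, hsr⟩ := hP n hn
    have hs : Function.Surjective s :=
      Function.LeftInverse.surjective (g := r) fun x => LinearMap.congr_fun hsr x
    exact isZero_leftDerived_obj_of_isZero_map_X _ P n <| isZero_torQuotFunctor_obj J <|
      Submodule.smul_top_eq_top_of_surjective hs <|
        Submodule.smul_top_pi_eq_top (smul_top_span_idempotent_eq_top he heJ)
  intro Q i
  exact exact_map_d_of_isZero_leftDerived (torQuotFunctor J) Q i (hvanish (i + 1) i.succ_pos)

/-- if `A/AeA` admits a projective resolution (as a right `A`-module)
whose components in positive degrees lie in `add (eA)`, then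
`Tor_i^A(A/AeA, A/AeA) = 0` for all `i > 0`: for every projective resolution `Q` of
`A/AeA`, the complex obtained by applying `- ⊗_A A/AeA` (i.e. taking the quotients by
`J = AeA`) is exact in all positive degrees. -/
theorem stmt1 {k A : Type} [CommRing k] [Ring A] [Algebra k A]
    (e : A) (he : IsIdempotentElem e)
    (J : Ideal Aᵐᵒᵖ)
    (hJ : J = Ideal.span (Set.range fun p : A × A => op (p.1 * e * p.2)))
    (hres : ∃ P : ProjectiveResolution
        (ModuleCat.of Aᵐᵒᵖ (A ⧸ (J • (⊤ : Submodule Aᵐᵒᵖ A)))),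
      ∀ n : ℕ, 0 < n →
        ∃ (m : ℕ)
          (r : P.complex.X n →ₗ[Aᵐᵒᵖ] (Fin m → (Submodule.span Aᵐᵒᵖ ({e} : Set A))))
          (s : (Fin m → (Submodule.span Aᵐᵒᵖ ({e} : Set A))) →ₗ[Aᵐᵒᵖ] P.complex.X n),
          s.comp r = LinearMap.id) :
    ∀ (Q : ProjectiveResolution
        (ModuleCat.of Aᵐᵒᵖ (A ⧸ (J • (⊤ : Submodule Aᵐᵒᵖ A))))) (i : ℕ),
      Function.Exact (torQuotMap J (Q.complex.d (i + 2) (i + 1)))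
        (torQuotMap J (Q.complex.d (i + 1) i)) :=
  stmt1_general e he J hJ hres
end

section
/- Let k be a field, A a finite-dimensional k-algebra, and P a right-bounded minimal complex of finitely generated projective A-modules. If for every finite-dimensional A-module S the total cohomology of RHom_A(P, S) is finite-dimensional, then P is isomorphic in the derived category to a bounded complex of finitely generated projectives, i.e., P ∈ K^b(proj A). -/
open CategoryTheory Limits

/-!
Let `S = A ⧸ rad A`. A bounded-above complex of projectives is K-projective, so morphisms
`P ⟶ S⟦n⟧` in the derived category are homotopy classes of chain maps. Minimality says that
`Hom(-, S)` kills every differential of `P`; hence every `A`-linear map `P^{-n} ⟶ S` is a chain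
map `P ⟶ S⟦n⟧`, and a null-homotopy of it would factor it through a differential, so it is zero
in the derived category only if it is zero. By Nakayama a nonzero finitely generated projective
module maps nonzero to `S`, so the finiteness hypothesis for `S` forces `P^i = 0` for `i ≪ 0`.
-/

/-- A complex representing an object of `K^b(proj A)`: a bounded complex of finitely
generated projective modules. -/
def IsKbProjComplex (A : Type) [Ring A] (Q : CochainComplex (ModuleCat A) ℤ) : Prop :=
  (∀ i : ℤ, Projective (Q.X i) ∧ Module.Finite A (Q.X i)) ∧
  ∃ a b : ℤ, ∀ i : ℤ, (i < a ∨ b < i) → IsZero (Q.X i)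

section Radical

variable {A : Type*} [Ring A] {M : Type*} [AddCommGroup M] [Module A M]

lemma LinearMap.map_eq_zero_of_mem_smul_top {T : Type*} [AddCommGroup T] [Module A T]
    {I : Ideal A} (hI : I ≤ Module.annihilator A T) (g : M →ₗ[A] T) {x : M}
    (hx : x ∈ I • (⊤ : Submodule A M)) : g x = 0 := by
  suffices I • (⊤ : Submodule A M) ≤ LinearMap.ker g from this hx
  refine Submodule.smul_le.2 fun r hr m _ => ?_
  rw [LinearMap.mem_ker, map_smul]
  exact Module.mem_annihilator.1 (hI hr) _

/-- The coordinates of a splitting of `M` into a free module land in `rad A`, so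
`M = rad A • M`. -/
lemma Module.subsingleton_of_forall_linearMap_quotient_jacobson_eq_zero
    [Module.Projective A M] [Module.Finite A M]
    (h : ∀ g : M →ₗ[A] A ⧸ Ring.jacobson A, g = 0) : Subsingleton M := by
  obtain ⟨s, hs⟩ := Module.projective_def'.1 (inferInstance : Module.Projective A M)
  have hcoord (x m : M) : s x m ∈ Ring.jacobson A := by
    rw [← Submodule.Quotient.mk_eq_zero]
    exact LinearMap.congr_fun (h ((Ring.jacobson A).mkQ ∘ₗ Finsupp.lapply m ∘ₗ s)) x
  have hle : (⊤ : Submodule A M) ≤ Ring.jacobson A • ⊤ := fun x _ => by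
    rw [← LinearMap.id_apply (R := A) x, ← hs, LinearMap.comp_apply,
      Finsupp.linearCombination_apply]
    exact Submodule.sum_mem _ fun m _ => Submodule.smul_mem_smul (hcoord x m) trivial
  rw [← Submodule.subsingleton_iff A]
  exact subsingleton_of_bot_eq_top
    (Submodule.FG.eq_bot_of_le_jacobson_smul Module.Finite.fg_top hle).symm

lemma CochainComplex.d_comp_eq_zero_of_range_le_smul_top {I : Ideal A}
    {K : CochainComplex (ModuleCat A) ℤ}
    (hK : ∀ i : ℤ, LinearMap.range (K.d i (i + 1)).hom ≤ I • (⊤ : Submodule A (K.X (i + 1))))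
    {X : ModuleCat A} (hX : I ≤ Module.annihilator A X) (j j' : ℤ) (w : K.X j' ⟶ X) :
    K.d j j' ≫ w = 0 := by
  by_cases hjj' : j + 1 = j'
  · subst hjj'
    ext x
    exact w.hom.map_eq_zero_of_mem_smul_top hX (hK j ⟨x, rfl⟩)
  · rw [K.shape _ _ hjj', zero_comp]

end Radical

namespace CochainComplex

variable {C : Type*} [Category C] [Abelian C]

lemma IsKProjective.nonempty_homotopy_zero_of_Q_map_eq_zero [HasDerivedCategory C]
    {K L : CochainComplex C ℤ} [K.IsKProjective] (f : K ⟶ L)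
    (hf : DerivedCategory.Q.map f = 0) : Nonempty (Homotopy f 0) := by
  refine ⟨HomotopyCategory.homotopyOfEq _ _ ((IsKProjective.Qh_map_bijective K _).injective ?_)⟩
  rw [← cancel_mono ((DerivedCategory.quotientCompQhIso C).hom.app L),
    DerivedCategory.quotientCompQhIso_hom_naturality, hf]
  simp

lemma exists_eq_d_comp_of_homotopy_mkHomToSingle {K : CochainComplex C ℤ} {X : C} {i : ℤ}
    {u : K.X i ⟶ X} {hu : ∀ j, (ComplexShape.up ℤ).Rel j i → K.d j i ≫ u = 0}
    (h : Homotopy (HomologicalComplex.mkHomToSingle u hu) 0) :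
    ∃ w : K.X (i + 1) ⟶ X, u = K.d i (i + 1) ≫ w := by
  refine ⟨h.hom (i + 1) i ≫ (HomologicalComplex.singleObjXSelf _ i X).hom, ?_⟩
  have hcomm := h.comm i
  rw [dNext_eq h.hom (show (ComplexShape.up ℤ).Rel i (i + 1) by simp),
    prevD_eq h.hom (show (ComplexShape.up ℤ).Rel (i - 1) i by simp),
    HomologicalComplex.mkHomToSingle_f] at hcomm
  simp only [HomologicalComplex.single_obj_d, comp_zero, add_zero,
    HomologicalComplex.zero_f] at hcomm
  rw [← Category.assoc, ← hcomm]
  simp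

lemma IsKProjective.hom_eq_zero_of_forall_hom_singleFunctor_eq_zero [HasDerivedCategory C]
    {K : CochainComplex C ℤ} [K.IsKProjective] {X : C}
    (hK : ∀ (j j' : ℤ) (w : K.X j' ⟶ X), K.d j j' ≫ w = 0) {i : ℤ}
    (hD : ∀ f : DerivedCategory.Q.obj K ⟶ (DerivedCategory.singleFunctor C i).obj X, f = 0)
    (u : K.X i ⟶ X) : u = 0 := by
  obtain ⟨h⟩ := nonempty_homotopy_zero_of_Q_map_eq_zero
    (HomologicalComplex.mkHomToSingle u fun j _ => hK j i u) (hD _)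
  obtain ⟨w, rfl⟩ := exists_eq_d_comp_of_homotopy_mkHomToSingle h
  exact hK i (i + 1) w

end CochainComplex

theorem stmt11_general (A : Type) [Ring A]
    [HasDerivedCategory (ModuleCat A)]
    (P : CochainComplex (ModuleCat A) ℤ)
    (hbdd : ∃ b : ℤ, ∀ i : ℤ, b < i → IsZero (P.X i))
    (hproj : ∀ i : ℤ, Projective (P.X i) ∧ Module.Finite A (P.X i))
    (hmin : ∀ i : ℤ, LinearMap.range (P.d i (i + 1)).hom ≤
      (Ideal.jacobson (⊥ : Ideal A)) • (⊤ : Submodule A (P.X (i + 1))))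
    (hfin : ∀ S : ModuleCat A, Module.Finite A S →
      ∃ N : ℕ, ∀ n : ℤ, (N : ℤ) < |n| →
        ∀ f : DerivedCategory.Q.obj P ⟶
          ((DerivedCategory.singleFunctor (ModuleCat A) 0).obj S)⟦n⟧, f = 0) :
    ∃ Q : CochainComplex (ModuleCat A) ℤ, IsKbProjComplex A Q ∧
      Nonempty (DerivedCategory.Q.obj P ≅ DerivedCategory.Q.obj Q) := by
  rw [Ideal.jacobson_bot] at hmin
  obtain ⟨b, hb⟩ := hbdd
  have : P.IsStrictlyLE b := (P.isStrictlyLE_iff b).2 hb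
  have : ∀ n, Projective (P.X n) := fun n => (hproj n).1
  have : P.IsKProjective := P.isKProjective_of_projective b
  let S := ModuleCat.of A (ULift (A ⧸ Ring.jacobson A))
  have hS : Ring.jacobson A ≤ Module.annihilator A S := by
    rw [ULift.moduleEquiv.annihilator_eq, Ideal.annihilator_quotient]
  obtain ⟨N, hN⟩ := hfin S inferInstance
  refine ⟨P, ⟨hproj, -N, b, fun i hi => hi.elim (fun hi => ?_) (hb i)⟩, ⟨Iso.refl _⟩⟩
  have : Module.Projective A (P.X i) := (IsProjective.iff_projective (P.X i)).2 (hproj i).1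
  have : Module.Finite A (P.X i) := (hproj i).2
  have hu (u : P.X i ⟶ S) : u = 0 := by
    refine CochainComplex.IsKProjective.hom_eq_zero_of_forall_hom_singleFunctor_eq_zero
      (CochainComplex.d_comp_eq_zero_of_range_le_smul_top hmin hS) (fun f => ?_) u
    let e := ((DerivedCategory.singleFunctors _).shiftIso (-i) i 0 (by omega)).app S
    rw [← cancel_mono e.inv, zero_comp]
    exact hN (-i) (by rw [abs_of_pos (by omega)]; omega) _
  have : Subsingleton (P.X i) :=
    Module.subsingleton_of_forall_linearMap_quotient_jacobson_eq_zero (A := A) fun g => by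
      ext x
      exact congrArg ULift.down (LinearMap.congr_fun (congrArg ModuleCat.Hom.hom
        (hu (ModuleCat.ofHom (ULift.moduleEquiv.symm.toLinearMap ∘ₗ g)))) x)
  exact ModuleCat.isZero_of_subsingleton _

/-- let `A` be a finite-dimensional algebra over a field `k` and `P`
a right-bounded minimal complex of finitely generated projective `A`-modules (the image
of each differential is contained in the radical of its target). If for every
finite-dimensional `A`-module `S` the total cohomology of `RHom_A(P, S)` is
finite-dimensional — equivalently, since the components of `P` are finitely generated
and `S` is finite-dimensional, `Hom_{D(Mod A)}(P, S[n]) = 0` for all but finitely many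
`n` — then `P` is isomorphic in the derived category to a bounded complex of finitely
generated projectives, i.e. `P ∈ K^b(proj A)`. -/
theorem stmt11 (k A : Type) [Field k] [Ring A] [Algebra k A] [FiniteDimensional k A]
    [HasDerivedCategory (ModuleCat A)]
    (P : CochainComplex (ModuleCat A) ℤ)
    (hbdd : ∃ b : ℤ, ∀ i : ℤ, b < i → IsZero (P.X i))
    (hproj : ∀ i : ℤ, Projective (P.X i) ∧ Module.Finite A (P.X i))
    (hmin : ∀ i : ℤ, LinearMap.range (P.d i (i + 1)).hom ≤
      (Ideal.jacobson (⊥ : Ideal A)) • (⊤ : Submodule A (P.X (i + 1))))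
    (hfin : ∀ S : ModuleCat A, Module.Finite A S →
      ∃ N : ℕ, ∀ n : ℤ, (N : ℤ) < |n| →
        ∀ f : DerivedCategory.Q.obj P ⟶
          ((DerivedCategory.singleFunctor (ModuleCat A) 0).obj S)⟦n⟧, f = 0) :
    ∃ Q : CochainComplex (ModuleCat A) ℤ, IsKbProjComplex A Q ∧
      Nonempty (DerivedCategory.Q.obj P ≅ DerivedCategory.Q.obj Q) :=
  stmt11_general A P hbdd hproj hmin hfin
end
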